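/- arXiv:2505.21685 — 2 statements merged into one kernel-verified Lean document; each statement's English description precedes it below -/
import Mathlib

section
/- Assuming linear block reward R(H) = ρH, at equilibrium (h_i = β_i + ρ/α_i) the decentralization coefficient satisfies D(h₁,...,h_n) ≥ (Σβ_i/H)·D(β₁,...,β_n) + ((Σρ/α_i)/H)·D(ρ/α₁,...,ρ/α_n), where D(x₁,...,x_n) = S(x₁/X,...,x_n/X) is the Shannon entropy of the normalized vector, X = Σx_i, and H = Σh_i. -/
/-- Decentralization coefficient: Shannon entropy of the normalized vector. -/
noncomputable def decentralization {n : ℕ} (x : Fin n → ℝ) : ℝ :=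
  -∑ i, (x i / ∑ j, x j) * Real.log (x i / ∑ j, x j)

lemma decentralization_eq {n : ℕ} (x : Fin n → ℝ) :
    decentralization x = ∑ i, Real.negMulLog (x i / ∑ j, x j) := by
  simp [decentralization, Real.negMulLog, ← Finset.sum_neg_distrib, neg_mul]

/-- At equilibrium `h_i = β_i + ρ/α_i`, the decentralization coefficient is at
least the weighted average of the decentralization of the coupons and of the
compute-cost components. -/
theorem decentralization_lower_bound (n : ℕ) (α β : Fin n → ℝ) (ρ : ℝ)
    (hα : ∀ i, 0 < α i) (hβ : ∀ i, 0 ≤ β i) (hρ : 0 < ρ)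
    (hB : 0 < ∑ i, β i) :
    ((∑ i, β i) / ∑ i, (β i + ρ / α i)) * decentralization β +
      ((∑ i, ρ / α i) / ∑ i, (β i + ρ / α i)) *
        decentralization (fun i => ρ / α i) ≤
      decentralization (fun i => β i + ρ / α i) := by
  have hn : Nonempty (Fin n) := by
    by_contra h
    rw [not_nonempty_iff] at h
    simp at hB
  set B := ∑ i, β i with hBdef
  set C := ∑ i, ρ / α i with hCdef
  have hC : 0 < C := Finset.sum_pos (fun i _ => div_pos hρ (hα i)) Finset.univ_nonempty
  have hHsum : (∑ i, (β i + ρ / α i)) = B + C := Finset.sum_add_distrib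
  have hH : 0 < B + C := add_pos hB hC
  rw [hHsum, decentralization_eq, decentralization_eq, decentralization_eq, hHsum,
    Finset.mul_sum, Finset.mul_sum, ← Finset.sum_add_distrib]
  refine Finset.sum_le_sum fun i _ => ?_
  have key := Real.concaveOn_negMulLog.2 (x := β i / B) (y := (ρ / α i) / C)
    (Set.mem_Ici.mpr (div_nonneg (hβ i) hB.le))
    (Set.mem_Ici.mpr (div_nonneg (div_pos hρ (hα i)).le hC.le))
    (div_nonneg hB.le hH.le) (div_nonneg hC.le hH.le)
    (by field_simp)
  simp only [smul_eq_mul] at key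
  have hB0 : B ≠ 0 := hB.ne'
  have hC0 : C ≠ 0 := hC.ne'
  have hH0 : B + C ≠ 0 := hH.ne'
  have hα0 : α i ≠ 0 := (hα i).ne'
  have e : B / (B + C) * (β i / B) + C / (B + C) * (ρ / α i / C)
      = (β i + ρ / α i) / (B + C) := by
    field_simp
  rw [e] at key
  exact key
end

section
/- If β_i = β for all i (coupons divided equally among n miners), then D(β,...,β) = log n, and consequently the equilibrium decentralization coefficient satisfies D(h₁,...,h_n) ≥ (nβ/H)·log n + ((Σρ/α_i)/H)·D(ρ/α₁,...,ρ/α_n). -/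
open Real Finset

theorem decentralization_eq_sum_negMulLog {n : ℕ} (x : Fin n → ℝ) :
    decentralization x = ∑ i, negMulLog (x i / ∑ j, x j) := by
  simp only [decentralization, negMulLog, neg_mul, sum_neg_distrib]

theorem decentralization_const {n : ℕ} {β : ℝ} (hβ : β ≠ 0) :
    decentralization (fun _ : Fin n => β) = log n := by
  rcases Nat.eq_zero_or_pos n with rfl | hn
  · simp [decentralization]
  have hn' : (n : ℝ) ≠ 0 := by positivity
  have hratio : β / ∑ _j : Fin n, β = (n : ℝ)⁻¹ := by
    rw [sum_const, card_univ, Fintype.card_fin, nsmul_eq_mul]; field_simp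
  rw [decentralization_eq_sum_negMulLog, hratio, sum_const, card_univ, Fintype.card_fin,
    nsmul_eq_mul, negMulLog, log_inv]
  field_simp

theorem weighted_negMulLog_le_negMulLog_mediant {x y X Y : ℝ} (hx : 0 ≤ x) (hxX : x ≤ X)
    (hy : 0 ≤ y) (hyY : y ≤ Y) :
    X / (X + Y) * negMulLog (x / X) + Y / (X + Y) * negMulLog (y / Y) ≤
      negMulLog ((x + y) / (X + Y)) := by
  rcases (add_nonneg (hx.trans hxX) (hy.trans hyY)).eq_or_lt with hXY | hXY
  · rw [← hXY]; simp
  have hweights : X / (X + Y) + Y / (X + Y) = 1 := by rw [← add_div, div_self hXY.ne']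
  have hmediant : X / (X + Y) * (x / X) + Y / (X + Y) * (y / Y) = (x + y) / (X + Y) := by
    rw [div_mul_eq_mul_div, div_mul_eq_mul_div, ← add_div,
      mul_div_cancel_of_imp' fun h => le_antisymm (h ▸ hxX) hx,
      mul_div_cancel_of_imp' fun h => le_antisymm (h ▸ hyY) hy]
  have := concaveOn_negMulLog.2 (Set.mem_Ici.2 (div_nonneg hx (hx.trans hxX)))
    (Set.mem_Ici.2 (div_nonneg hy (hy.trans hyY))) (div_nonneg (hx.trans hxX) hXY.le)
    (div_nonneg (hy.trans hyY) hXY.le) hweights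
  simpa only [smul_eq_mul, hmediant] using this

theorem le_decentralization_add {n : ℕ} {b c : Fin n → ℝ} (hb : 0 ≤ b) (hc : 0 ≤ c) :
    (∑ i, b i) / (∑ i, (b i + c i)) * decentralization b +
        (∑ i, c i) / (∑ i, (b i + c i)) * decentralization c ≤
      decentralization (fun i => b i + c i) := by
  simp only [decentralization_eq_sum_negMulLog, mul_sum, ← sum_add_distrib]
  refine sum_le_sum fun i _ => ?_
  rw [sum_add_distrib]
  exact weighted_negMulLog_le_negMulLog_mediant (hb i)
    (single_le_sum (fun j _ => hb j) (mem_univ i)) (hc i)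
    (single_le_sum (fun j _ => hc j) (mem_univ i))

theorem decentralization_equal_coupons_general (n : ℕ)
    (α : Fin n → ℝ) (β ρ : ℝ) (hα : ∀ i, 0 < α i) (hβ : 0 < β) (hρ : 0 < ρ) :
    decentralization (fun _ : Fin n => β) = Real.log n ∧
    ((n : ℝ) * β / ∑ i, (β + ρ / α i)) * Real.log n +
        ((∑ i, ρ / α i) / ∑ i, (β + ρ / α i)) *
          decentralization (fun i => ρ / α i) ≤
      decentralization (fun i : Fin n => β + ρ / α i) := by
  have hconst := decentralization_const (n := n) hβ.ne'
  refine ⟨hconst, ?_⟩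
  have h := le_decentralization_add (b := fun _ : Fin n => β) (c := fun i => ρ / α i)
    (fun _ => hβ.le) (fun i => (div_pos hρ (hα i)).le)
  simpa only [hconst, sum_const, card_univ, Fintype.card_fin, nsmul_eq_mul] using h

/-- If coupons are divided equally (`β_i = β` for all `i`), then
`D(β,…,β) = log n` and the equilibrium decentralization satisfies the stated
lower bound. -/
theorem decentralization_equal_coupons (n : ℕ) (hn : 0 < n)
    (α : Fin n → ℝ) (β ρ : ℝ) (hα : ∀ i, 0 < α i) (hβ : 0 < β) (hρ : 0 < ρ) :
    decentralization (fun _ : Fin n => β) = Real.log n ∧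
    ((n : ℝ) * β / ∑ i, (β + ρ / α i)) * Real.log n +
        ((∑ i, ρ / α i) / ∑ i, (β + ρ / α i)) *
          decentralization (fun i => ρ / α i) ≤
      decentralization (fun i : Fin n => β + ρ / α i) :=
  decentralization_equal_coupons_general n α β ρ hα hβ hρ
end
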